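/- arXiv:1705.02971 — 3 statements merged into one kernel-verified Lean document; each statement's English description precedes it below -/
import Mathlib

section
/- Every group G gives rise to a special dagger Frobenius algebra in Rel on the underlying set of G, with multiplication relation m = {((g,h), gh)} and unit relation e = {(•, 1_G)}; more generally every groupoid G gives such a Frobenius algebra with m relating composable pairs to their composite and e relating • to the identities. -/
open CategoryTheory

/-- Every group `G` gives a special dagger Frobenius algebra in `Rel` on the underlying
set of `G` (multiplication relation `m = {((g,h), g*h)}`, unit `e = {(•,1)}`), and more
generally every groupoid `C` gives one on its set of arrows (`m` relates composable
pairs to their composite, `e` marks the identities): associativity (A), unitality (U),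
the Frobenius law (F) and speciality (M) hold for these relations. -/
theorem group_and_groupoid_give_special_dagger_frobenius
    (G : Type*) [Group G] (C : Type*) [Groupoid C] :
    -- the group case
    ((∀ a b c d : G, (∃ w, w = a * b ∧ d = w * c) ↔ (∃ w, w = b * c ∧ d = a * w)) ∧
     (∀ a d : G, (∃ u, u = (1 : G) ∧ d = u * a) ↔ d = a) ∧
     (∀ a d : G, (∃ u, u = (1 : G) ∧ d = a * u) ↔ d = a) ∧
     (∀ a d : G, (∃ p q : G, a = p * q ∧ d = p * q) ↔ d = a) ∧
     (∀ a b u w : G, (∃ v, a = u * v ∧ w = v * b) ↔ (∃ t, t = a * b ∧ t = u * w)) ∧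
     (∀ a b u w : G, (∃ v, u = a * v ∧ b = v * w) ↔ (∃ t, t = a * b ∧ t = u * w))) ∧
    -- the groupoid case
    (∀ (m : (Σ p : C × C, p.1 ⟶ p.2) → (Σ p : C × C, p.1 ⟶ p.2) →
            (Σ p : C × C, p.1 ⟶ p.2) → Prop)
       (e : (Σ p : C × C, p.1 ⟶ p.2) → Prop),
      (∀ u v w, m u v w ↔
        ∃ h : u.1.2 = v.1.1, w = ⟨(u.1.1, v.1.2), u.2 ≫ eqToHom h ≫ v.2⟩) →
      (∀ x, e x ↔ ∃ a : C, x = ⟨(a, a), 𝟙 a⟩) →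
      (∀ a b c d, (∃ w, m a b w ∧ m w c d) ↔ (∃ w, m b c w ∧ m a w d)) ∧
      (∀ a d, (∃ u, e u ∧ m u a d) ↔ d = a) ∧
      (∀ a d, (∃ u, e u ∧ m a u d) ↔ d = a) ∧
      (∀ a d, (∃ p q, m p q a ∧ m p q d) ↔ d = a) ∧
      (∀ a b u w, (∃ v, m u v a ∧ m v b w) ↔ (∃ t, m a b t ∧ m u w t)) ∧
      (∀ a b u w, (∃ v, m a v u ∧ m v w b) ↔ (∃ t, m a b t ∧ m u w t))) := by
  constructor
  · refine ⟨?_, ?_, ?_, ?_, ?_, ?_⟩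
    · intro a b c d
      constructor
      · rintro ⟨w, rfl, rfl⟩; exact ⟨b * c, rfl, by group⟩
      · rintro ⟨w, rfl, rfl⟩; exact ⟨a * b, rfl, by group⟩
    · intro a d
      constructor
      · rintro ⟨u, rfl, rfl⟩; simp
      · rintro rfl; exact ⟨1, rfl, by simp⟩
    · intro a d
      constructor
      · rintro ⟨u, rfl, rfl⟩; simp
      · rintro rfl; exact ⟨1, rfl, by simp⟩
    · intro a d
      constructor
      · rintro ⟨p, q, rfl, rfl⟩; rfl
      · rintro rfl; exact ⟨d, 1, by simp, by simp⟩
    · intro a b u w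
      constructor
      · rintro ⟨v, rfl, rfl⟩; exact ⟨u * v * b, rfl, by group⟩
      · rintro ⟨t, rfl, h⟩
        exact ⟨u⁻¹ * a, by group, by rw [mul_assoc, h]; group⟩
    · intro a b u w
      constructor
      · rintro ⟨v, rfl, rfl⟩; exact ⟨a * v * w, by group, by group⟩
      · rintro ⟨t, rfl, h⟩
        exact ⟨a⁻¹ * u, by group, by rw [mul_assoc, ← h]; group⟩
  · intro m e hm he
    refine ⟨?_, ?_, ?_, ?_, ?_, ?_⟩
    · rintro ⟨⟨x1, x2⟩, f⟩ ⟨⟨y1, y2⟩, g⟩ ⟨⟨z1, z2⟩, k⟩ d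
      constructor
      · rintro ⟨w, hab, hwc⟩
        rw [hm] at hab hwc
        obtain ⟨h1, rfl⟩ := hab
        obtain ⟨h2, rfl⟩ := hwc
        dsimp at h1 h2 ⊢
        subst h1; subst h2
        refine ⟨⟨(x2, z2), g ≫ eqToHom rfl ≫ k⟩, ?_, ?_⟩
        · rw [hm]; exact ⟨rfl, rfl⟩
        · rw [hm]; exact ⟨rfl, by simp⟩
      · rintro ⟨w, hbc, haw⟩
        rw [hm] at hbc haw
        obtain ⟨h1, rfl⟩ := hbc
        obtain ⟨h2, rfl⟩ := haw
        dsimp at h1 h2 ⊢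
        subst h1; subst h2
        refine ⟨⟨(x1, y2), f ≫ eqToHom rfl ≫ g⟩, ?_, ?_⟩
        · rw [hm]; exact ⟨rfl, rfl⟩
        · rw [hm]; exact ⟨rfl, by simp⟩
    · rintro ⟨⟨x1, x2⟩, f⟩ d
      constructor
      · rintro ⟨u, heu, hud⟩
        rw [he] at heu
        obtain ⟨a, rfl⟩ := heu
        rw [hm] at hud
        obtain ⟨h, rfl⟩ := hud
        dsimp at h ⊢
        subst h; simp
      · rintro rfl
        refine ⟨⟨(x1, x1), 𝟙 x1⟩, ?_, ?_⟩
        · rw [he]; exact ⟨x1, rfl⟩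
        · rw [hm]; exact ⟨rfl, by simp⟩
    · rintro ⟨⟨x1, x2⟩, f⟩ d
      constructor
      · rintro ⟨u, heu, hud⟩
        rw [he] at heu
        obtain ⟨a, rfl⟩ := heu
        rw [hm] at hud
        obtain ⟨h, rfl⟩ := hud
        dsimp at h ⊢
        subst h; simp
      · rintro rfl
        refine ⟨⟨(x2, x2), 𝟙 x2⟩, ?_, ?_⟩
        · rw [he]; exact ⟨x2, rfl⟩
        · rw [hm]; exact ⟨rfl, by simp⟩
    · rintro ⟨⟨x1, x2⟩, f⟩ d
      constructor
      · rintro ⟨p, q, hpa, hpd⟩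
        rw [hm] at hpa hpd
        obtain ⟨h1, ha⟩ := hpa
        obtain ⟨h2, rfl⟩ := hpd
        exact ha.symm
      · rintro rfl
        refine ⟨⟨(x1, x2), f⟩, ⟨(x2, x2), 𝟙 x2⟩, ?_, ?_⟩ <;>
        · rw [hm]; exact ⟨rfl, by simp⟩
    · intro a b u w
      constructor
      · rintro ⟨v, h1, h2⟩
        rw [hm] at h1 h2
        obtain ⟨hv1, rfl⟩ := h1
        obtain ⟨hv2, rfl⟩ := h2
        obtain ⟨⟨u1, u2⟩, fu⟩ := u
        obtain ⟨⟨v1, v2⟩, fv⟩ := v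
        obtain ⟨⟨b1, b2⟩, fb⟩ := b
        dsimp at hv1 hv2
        subst hv1; subst hv2
        refine ⟨⟨(u1, b2), fu ≫ fv ≫ fb⟩, ?_, ?_⟩ <;>
        · rw [hm]; exact ⟨rfl, by simp⟩
      · rintro ⟨t, h3, h4⟩
        rw [hm] at h3 h4
        obtain ⟨hab, rfl⟩ := h3
        obtain ⟨huw, ht⟩ := h4
        obtain ⟨⟨a1, a2⟩, fa⟩ := a
        obtain ⟨⟨b1, b2⟩, fb⟩ := b
        obtain ⟨⟨u1, u2⟩, fu⟩ := u
        obtain ⟨⟨w1, w2⟩, fw⟩ := w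
        dsimp at hab huw ht
        subst hab; subst huw
        simp only [Sigma.ext_iff, Prod.mk.injEq, eqToHom_refl, Category.id_comp] at ht
        obtain ⟨⟨rfl, rfl⟩, hh⟩ := ht
        have heq : fa ≫ fb = fu ≫ fw := eq_of_heq hh
        refine ⟨⟨(u2, a2), Groupoid.inv fu ≫ fa⟩, ?_, ?_⟩
        · rw [hm]; exact ⟨rfl, by simp⟩
        · rw [hm]
          refine ⟨rfl, ?_⟩
          simp only [eqToHom_refl, Category.id_comp, Category.assoc, Sigma.ext_iff, Prod.mk.injEq, and_self,
            heq_eq_eq, true_and]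
          rw [heq]; simp
    · intro a b u w
      constructor
      · rintro ⟨v, h1, h2⟩
        rw [hm] at h1 h2
        obtain ⟨hv1, rfl⟩ := h1
        obtain ⟨hv2, rfl⟩ := h2
        obtain ⟨⟨a1, a2⟩, fa⟩ := a
        obtain ⟨⟨v1, v2⟩, fv⟩ := v
        obtain ⟨⟨w1, w2⟩, fw⟩ := w
        dsimp at hv1 hv2
        subst hv1; subst hv2
        refine ⟨⟨(a1, w2), fa ≫ fv ≫ fw⟩, ?_, ?_⟩ <;>
        · rw [hm]; exact ⟨rfl, by simp⟩
      · rintro ⟨t, h3, h4⟩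
        rw [hm] at h3 h4
        obtain ⟨hab, rfl⟩ := h3
        obtain ⟨huw, ht⟩ := h4
        obtain ⟨⟨a1, a2⟩, fa⟩ := a
        obtain ⟨⟨b1, b2⟩, fb⟩ := b
        obtain ⟨⟨u1, u2⟩, fu⟩ := u
        obtain ⟨⟨w1, w2⟩, fw⟩ := w
        dsimp at hab huw ht
        subst hab; subst huw
        simp only [Sigma.ext_iff, Prod.mk.injEq, eqToHom_refl, Category.id_comp] at ht
        obtain ⟨⟨rfl, rfl⟩, hh⟩ := ht
        have heq : fa ≫ fb = fu ≫ fw := eq_of_heq hh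
        refine ⟨⟨(a2, u2), Groupoid.inv fa ≫ fu⟩, ?_, ?_⟩
        · rw [hm]; exact ⟨rfl, by simp⟩
        · rw [hm]
          refine ⟨rfl, ?_⟩
          simp only [eqToHom_refl, Category.id_comp, Category.assoc, Sigma.ext_iff, Prod.mk.injEq, and_self,
            heq_eq_eq, true_and]
          rw [← heq]; simp
end

section
/- Given a special dagger Frobenius algebra (X, m, e) in Rel, define U = {x ∈ X : (•,x) ∈ e}, and for f,g ∈ X say f·g ∋ h when ((f,g),h) ∈ m. Then X with partial multiplication m, set of units U, source s(f) = the unique x ∈ U with ((f,x),f) ∈ m, target t(f) = the unique y ∈ U with ((y,f),f) ∈ m, and inverses f* determined by f·f* ∈ U and f*·f ∈ U, forms a groupoid. -/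
/-- The groupoid–Frobenius algebra correspondence (Heunen–Cattaneo–Contreras direction
"Frobenius algebra ⟹ groupoid"): given a special dagger Frobenius algebra `(X, m, e)`
in `Rel` — i.e. a relation `m : X × X → X` and unit `e : 1 → X` (identified with the
set `U` of units) satisfying associativity (A), unitality (U), the Frobenius law (F)
and speciality (M) — the set `X` with partial multiplication `m` is a groupoid:
the multiplication is single-valued where defined, each element has a unique source
unit and a unique target unit, each element has a two-sided inverse through units,
and a product is defined exactly when source matches target. -/
theorem frobenius_in_Rel_gives_groupoid {X : Type*}
    (m : X → X → X → Prop) (e : X → Prop)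
    -- (A) associativity
    (hA : ∀ a b c d, (∃ w, m a b w ∧ m w c d) ↔ (∃ w, m b c w ∧ m a w d))
    -- (U) unitality
    (hU₁ : ∀ a d, (∃ u, e u ∧ m u a d) ↔ d = a)
    (hU₂ : ∀ a d, (∃ u, e u ∧ m a u d) ↔ d = a)
    -- (M) speciality
    (hM : ∀ a d, (∃ p q, m p q a ∧ m p q d) ↔ d = a)
    -- (F) Frobenius law
    (hF₁ : ∀ a b u w, (∃ v, m u v a ∧ m v b w) ↔ (∃ t, m a b t ∧ m u w t))
    (hF₂ : ∀ a b u w, (∃ v, m a v u ∧ m v w b) ↔ (∃ t, m a b t ∧ m u w t)) :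
    -- the multiplication is single-valued where defined
    (∀ a b c c', m a b c → m a b c' → c = c') ∧
    -- unique source: s(f) is the unique unit x with f·x = f
    (∀ f, ∃! x, e x ∧ m f x f) ∧
    -- unique target: t(f) is the unique unit y with y·f = f
    (∀ f, ∃! y, e y ∧ m y f f) ∧
    -- inverses: every f has g with f·g and g·f units
    (∀ f, ∃ g, (∃ u, e u ∧ m f g u) ∧ (∃ v, e v ∧ m g f v)) ∧
    -- composability: f·g is defined iff s(f) = t(g)
    (∀ f g, (∃ c, m f g c) ↔ ∃ x, e x ∧ m f x f ∧ m x g g) := by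
 -- single-valuedness from speciality
  have sv : ∀ a b c c', m a b c → m a b c' → c = c' := by
    intro a b c c' h h'
    exact ((hM c c').mp ⟨a, b, h, h'⟩).symm
  -- two units compose only when equal
  have L1 : ∀ u v w, e u → e v → m u v w → u = v ∧ w = u := by
    intro u v w hu hv h
    have h1 : w = v := (hU₁ v w).mp ⟨u, hu, h⟩
    have h2 : w = u := (hU₂ u w).mp ⟨v, hv, h⟩
    exact ⟨h2.symm.trans h1, h2⟩
  -- inverse construction via the Frobenius law
  have inv : ∀ f u₀ t, e u₀ → m f u₀ f → e t → m t f f →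
      ∃ g, m f g t ∧ m g f u₀ := by
    intro f u₀ t hu₀ hmu hT hmt
    exact (hF₂ f u₀ t f).mpr ⟨f, hmu, hmt⟩
  refine ⟨sv, ?_, ?_, ?_, ?_⟩
  · -- unique source
    intro f
    obtain ⟨u₀, hu₀, hmu⟩ := (hU₂ f f).mpr rfl
    obtain ⟨t, ht, hmt⟩ := (hU₁ f f).mpr rfl
    obtain ⟨g, hg1, hg2⟩ := inv f u₀ t hu₀ hmu ht hmt
    refine ⟨u₀, ⟨hu₀, hmu⟩, ?_⟩
    rintro x ⟨hx, hmx⟩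
    obtain ⟨w, hw1, hw2⟩ := (hA g f x u₀).mpr ⟨f, hmx, hg2⟩
    have : w = u₀ := sv g f w u₀ hw1 hg2
    rw [this] at hw2
    exact ((L1 u₀ x u₀ hu₀ hx hw2).1).symm
  · -- unique target
    intro f
    obtain ⟨u₀, hu₀, hmu⟩ := (hU₂ f f).mpr rfl
    obtain ⟨t, ht, hmt⟩ := (hU₁ f f).mpr rfl
    obtain ⟨g, hg1, hg2⟩ := inv f u₀ t hu₀ hmu ht hmt
    refine ⟨t, ⟨ht, hmt⟩, ?_⟩
    rintro y ⟨hy, hmy⟩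
    obtain ⟨w, hw1, hw2⟩ := (hA y f g t).mp ⟨f, hmy, hg1⟩
    have : w = t := sv f g w t hw1 hg1
    rw [this] at hw2
    exact (L1 y t t hy ht hw2).1
  · -- inverses
    intro f
    obtain ⟨u₀, hu₀, hmu⟩ := (hU₂ f f).mpr rfl
    obtain ⟨t, ht, hmt⟩ := (hU₁ f f).mpr rfl
    obtain ⟨g, hg1, hg2⟩ := inv f u₀ t hu₀ hmu ht hmt
    exact ⟨g, ⟨t, ht, hg1⟩, ⟨u₀, hu₀, hg2⟩⟩
  · -- composability
    intro f g
    constructor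
    · rintro ⟨c, hc⟩
      obtain ⟨x, hx, hmx⟩ := (hU₂ f f).mpr rfl
      obtain ⟨w, hw1, hw2⟩ := (hA f x g c).mp ⟨f, hmx, hc⟩
      have : w = g := (hU₁ g w).mp ⟨x, hx, hw1⟩
      subst this
      exact ⟨x, hx, hmx, hw1⟩
    · rintro ⟨x, hx, hmf, hmg⟩
      obtain ⟨s, hs1, _⟩ := (hF₁ f g f g).mp ⟨x, hmf, hmg⟩
      exact ⟨s, hs1⟩
end

section
/- For d an odd prime, the d+1 quadrature bases of ℂ^d obtained from the position eigenbasis by the projective unitary representation of SL(2, ℤ_d) (the d+1 eigenbases of the Weyl operators labeled by the Lagrangian lines of ℤ_d²) are pairwise mutually unbiased: |⟨u|v⟩|² = 1/d for eigenvectors u, v belonging to distinct bases. -/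
open Complex Finset

/-- `L` is a Lagrangian line of the symplectic space `ℤ_d²`,
with `ω((a,b),(a',b')) = ab' − a'b`. -/
def IsLagrangian (d : ℕ) (L : Submodule (ZMod d) (ZMod d × ZMod d)) : Prop :=
  ∀ x : ZMod d × ZMod d, x ∈ L ↔ ∀ y ∈ L, x.1 * y.2 - y.1 * x.2 = 0

/-- The Weyl (generalized Pauli) operator `W(a,b)` on `ℂ^d` labeled by a phase-space
point `(a,b) ∈ ℤ_d²`: `(W(a,b) f)(j) = ζ^{b·j} f(j−a)` where `ζ = e^{2πi/d}`. -/
noncomputable def weyl (d : ℕ) [NeZero d] (p : ZMod d × ZMod d)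
    (f : ZMod d → ℂ) : ZMod d → ℂ :=
  fun j => Complex.exp (2 * Real.pi * Complex.I / d) ^ (p.2 * j).val * f (j - p.1)

noncomputable def ee (d : ℕ) (x : ZMod d) : ℂ := Complex.exp (2 * Real.pi * Complex.I / d) ^ x.val

lemma zeta_prim (d : ℕ) [NeZero d] :
    IsPrimitiveRoot (Complex.exp (2 * Real.pi * Complex.I / d)) d :=
  Complex.isPrimitiveRoot_exp d (NeZero.ne d)

lemma ee_add (d : ℕ) [NeZero d] (x y : ZMod d) : ee d (x + y) = ee d x * ee d y := by
  set ζ := Complex.exp (2 * Real.pi * Complex.I / d)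
  have hζ : ζ ^ d = 1 := (zeta_prim d).pow_eq_one
  show ζ ^ (x+y).val = ζ ^ x.val * ζ ^ y.val
  rw [ZMod.val_add, ← pow_add]
  conv_rhs => rw [← Nat.div_add_mod (x.val + y.val) d]
  rw [pow_add, pow_mul, hζ, one_pow, one_mul]

lemma ee_zero (d : ℕ) [NeZero d] : ee d 0 = 1 := by
  show _ ^ (0:ZMod d).val = 1
  rw [ZMod.val_zero, pow_zero]

lemma norm_ee (d : ℕ) [NeZero d] (x : ZMod d) : ‖ee d x‖ = 1 := by
  have : ‖Complex.exp (2 * Real.pi * Complex.I / d)‖ = 1 := by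
    have : (2 * Real.pi * Complex.I / d) = ((2 * Real.pi / d : ℝ) : ℂ) * Complex.I := by
      push_cast; ring
    rw [this, Complex.norm_exp_ofReal_mul_I]
  show ‖_ ^ _‖ = 1
  rw [norm_pow, this, one_pow]

lemma ee_ne_zero (d : ℕ) [NeZero d] (x : ZMod d) : ee d x ≠ 0 := by
  intro h; have := norm_ee d x; rw [h] at this; simp at this

lemma ee_conj (d : ℕ) [NeZero d] (x : ZMod d) :
    (starRingEnd ℂ) (ee d x) = ee d (-x) := by
  have h1 : ee d (-x) * ee d x = 1 := by rw [← ee_add]; simp [ee_zero]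
  have h2 : (starRingEnd ℂ) (ee d x) * ee d x = 1 := by
    rw [mul_comm, Complex.mul_conj]
    norm_cast
    rw [Complex.normSq_eq_norm_sq, norm_ee]; norm_num
  exact mul_right_cancel₀ (ee_ne_zero d x) (h2.trans h1.symm)

lemma ee_eq_one_iff (d : ℕ) [NeZero d] (x : ZMod d) : ee d x = 1 ↔ x = 0 := by
  constructor
  · intro h
    have hdvd := ((zeta_prim d).pow_eq_one_iff_dvd x.val).mp h
    have hlt := ZMod.val_lt x
    have hv : x.val = 0 := Nat.eq_zero_of_dvd_of_lt hdvd hlt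
    exact (ZMod.val_eq_zero x).mp hv
  · rintro rfl; exact ee_zero d

lemma sum_ee (d : ℕ) [NeZero d] (a : ZMod d) (ha : a ≠ 0) :
    ∑ j : ZMod d, ee d (a * j) = 0 := by
  have key : ee d a * ∑ j : ZMod d, ee d (a * j) = ∑ j : ZMod d, ee d (a * j) := by
    rw [Finset.mul_sum]
    apply Fintype.sum_equiv (Equiv.addRight (1 : ZMod d))
    intro j
    rw [← ee_add]
    congr 1
    simp only [Equiv.coe_addRight]
    ring
  have hzero : (ee d a - 1) * ∑ j : ZMod d, ee d (a * j) = 0 := by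
    rw [sub_mul, key, one_mul, sub_self]
  rcases mul_eq_zero.mp hzero with h | h
  · exact absurd ((ee_eq_one_iff d a).mp (by linear_combination h)) ha
  · exact h

lemma zmod_cast_val (d : ℕ) [NeZero d] (j : ZMod d) : ((j.val : ℕ) : ZMod d) = j :=
  ZMod.natCast_rightInverse j

lemma flat_of_rec (d : ℕ) [NeZero d] (u : ZMod d → ℂ) (m : ZMod d) (c : ℂ)
    (hrec : ∀ j, ee d (m * j) * u (j - 1) = c * u j)
    (hu : ∑ j, ‖u j‖ ^ 2 = 1) :
    ‖c‖ = 1 ∧ ∀ j, (d : ℝ) * ‖u j‖ ^ 2 = 1 := by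
  have hshift : ∑ j : ZMod d, ‖u (j - 1)‖ ^ 2 = ∑ j : ZMod d, ‖u j‖ ^ 2 := by
    apply Fintype.sum_equiv (Equiv.subRight (1 : ZMod d))
    intro j; simp
  have h1 : ∀ j, ‖u (j - 1)‖ = ‖c‖ * ‖u j‖ := by
    intro j
    have := congrArg norm (hrec j)
    rwa [norm_mul, norm_mul, norm_ee, one_mul] at this
  have hc2 : ‖c‖ ^ 2 = 1 := by
    have : ∑ j : ZMod d, ‖u (j - 1)‖ ^ 2 = ‖c‖ ^ 2 * ∑ j : ZMod d, ‖u j‖ ^ 2 := by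
      rw [Finset.mul_sum]
      exact Finset.sum_congr rfl fun j _ => by rw [h1 j]; ring
    rw [hshift, hu, mul_one] at this
    linarith
  have hc : ‖c‖ = 1 := by nlinarith [norm_nonneg c]
  refine ⟨hc, ?_⟩
  have hconst : ∀ j, ‖u j‖ = ‖u 0‖ := by
    have hnat : ∀ n : ℕ, ‖u (n : ZMod d)‖ = ‖u 0‖ := by
      intro n
      induction n with
      | zero => norm_num
      | succ n ih =>
        have h2 : ((n + 1 : ℕ) : ZMod d) - 1 = (n : ZMod d) := by push_cast; ring
        have := h1 ((n + 1 : ℕ) : ZMod d)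
        rw [hc, one_mul, h2] at this
        rw [← this, ih]
    intro j
    rw [← zmod_cast_val d j]
    exact hnat j.val
  have hcard : ∑ j : ZMod d, ‖u j‖ ^ 2 = (d : ℝ) * ‖u 0‖ ^ 2 := by
    rw [Finset.sum_congr rfl fun j _ => by rw [hconst j]]
    simp [Finset.card_univ, ZMod.card]
  intro j
  rw [hconst j]
  rw [hcard] at hu
  exact hu

lemma shift_of_rec (d : ℕ) [NeZero d] (w : ZMod d → ℂ) (δ : ZMod d) (K : ℂ)
    (hrec : ∀ j, w j = K * ee d (δ * j) * w (j - 1)) (t : ZMod d) :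
    ∃ ph : ℂ, ∀ k, w (k + t) = ph * ee d (δ * t * k) * w k := by
  suffices h : ∀ n : ℕ, ∃ ph : ℂ, ∀ k, w (k + (n : ZMod d)) = ph * ee d (δ * n * k) * w k by
    obtain ⟨ph, hph⟩ := h t.val
    exact ⟨ph, fun k => by rw [← zmod_cast_val d t]; exact hph k⟩
  intro n
  induction n with
  | zero => exact ⟨1, fun k => by simp [ee_zero]⟩
  | succ n ih =>
    obtain ⟨ph, hph⟩ := ih
    refine ⟨K * ee d (δ * ((n : ZMod d) + 1)) * ph, fun k => ?_⟩
    have h1 : ((n + 1 : ℕ) : ZMod d) = (n : ZMod d) + 1 := by push_cast; ring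
    have h2 : (k + ((n : ZMod d) + 1)) - 1 = k + (n : ZMod d) := by ring
    have h3 := hrec (k + ((n : ZMod d) + 1))
    rw [h2, hph k] at h3
    rw [h1, h3]
    have e1 : ee d (δ * (k + ((n:ZMod d) + 1))) * ee d (δ * (n:ZMod d) * k)
        = ee d (δ * ((n:ZMod d) + 1)) * ee d (δ * ((n:ZMod d)+1) * k) := by
      rw [← ee_add, ← ee_add]; congr 1; ring
    linear_combination (K * ph * w k) * e1

lemma delta_of_rec (d : ℕ) [NeZero d] (v : ZMod d → ℂ) (c : ℂ)
    (hrec : ∀ j, ee d j * v j = c * v j)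
    (hv : ∑ j, ‖v j‖ ^ 2 = 1) :
    ∃ j₀ : ZMod d, (∀ j ≠ j₀, v j = 0) ∧ ‖v j₀‖ ^ 2 = 1 := by
  have hex : ∃ j₀, v j₀ ≠ 0 := by
    by_contra h
    push_neg at h
    have hz : ∑ j : ZMod d, ‖v j‖ ^ 2 = 0 := Finset.sum_eq_zero fun j _ => by rw [h j]; simp
    rw [hz] at hv; norm_num at hv
  obtain ⟨j₀, hj₀⟩ := hex
  have hc : ee d j₀ = c := by
    have := hrec j₀
    exact mul_right_cancel₀ hj₀ this
  have h0 : ∀ j ≠ j₀, v j = 0 := by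
    intro j hj
    by_contra hvj
    have hcj : ee d j = c := mul_right_cancel₀ hvj (hrec j)
    apply hj
    have : ee d (j - j₀) * ee d j₀ = ee d j := by rw [← ee_add]; congr 1; ring
    have heq : ee d (j - j₀) = 1 := by
      have := this.trans (hcj.trans hc.symm)
      field_simp [ee_ne_zero] at this
      exact this
    have := (ee_eq_one_iff d _).mp heq
    linear_combination (norm := ring_nf) this
  refine ⟨j₀, h0, ?_⟩
  rw [Finset.sum_eq_single j₀ (fun b _ hb => by rw [h0 b hb]; simp) (by simp)] at hv
  exact hv


lemma lagr_exists_nonzero (d : ℕ) (hd : 1 < d) (L : Submodule (ZMod d) (ZMod d × ZMod d))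
    (hL : IsLagrangian d L) : ∃ p ∈ L, p ≠ 0 := by
  by_contra h
  push_neg at h
  have h10 : ((1, 0) : ZMod d × ZMod d) ∈ L := by
    refine (hL _).mpr fun y hy => ?_
    rw [h y hy]
    simp
  have h1 : (1 : ZMod d) = 0 := congrArg Prod.fst (h _ h10)
  haveI : Fact (1 < d) := ⟨hd⟩
  exact one_ne_zero h1

lemma exists_smul (d : ℕ) (hd : Nat.Prime d) (p x : ZMod d × ZMod d) (hp0 : p ≠ 0)
    (h : x.1 * p.2 - p.1 * x.2 = 0) : ∃ t : ZMod d, x = t • p := by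
  haveI := Fact.mk hd
  by_cases h1 : p.1 = 0
  · have h2 : p.2 ≠ 0 := fun hh => hp0 (Prod.ext h1 hh)
    refine ⟨p.2⁻¹ * x.2, Prod.ext ?_ ?_⟩
    · have hx1 : x.1 = 0 := by
        have : x.1 * p.2 = 0 := by rw [h1] at h; linear_combination h
        rcases mul_eq_zero.mp this with h' | h'
        · exact h'
        · exact absurd h' h2
      simp [hx1, h1]
    · show x.2 = (p.2⁻¹ * x.2) * p.2
      field_simp
  · refine ⟨p.1⁻¹ * x.1, Prod.ext ?_ ?_⟩
    · show x.1 = (p.1⁻¹ * x.1) * p.1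
      field_simp
    · show x.2 = (p.1⁻¹ * x.1) * p.2
      field_simp
      linear_combination -h

lemma lagr_span (d : ℕ) (hd : Nat.Prime d) (L : Submodule (ZMod d) (ZMod d × ZMod d))
    (hL : IsLagrangian d L) (p : ZMod d × ZMod d) (hp : p ∈ L) (hp0 : p ≠ 0) (x : ZMod d × ZMod d) :
    x ∈ L ↔ ∃ t : ZMod d, x = t • p := by
  constructor
  · intro hx
    exact exists_smul d hd p x hp0 ((hL x).mp hx p hp)
  · rintro ⟨t, rfl⟩
    refine (hL _).mpr fun y hy => ?_
    have hpy := (hL p).mp hp y hy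
    have h1 : (t • p).1 = t * p.1 := rfl
    have h2 : (t • p).2 = t * p.2 := rfl
    rw [h1, h2]
    linear_combination t * hpy

lemma lagr_eq (d : ℕ) (hd : Nat.Prime d) (L₁ L₂ : Submodule (ZMod d) (ZMod d × ZMod d))
    (hL₁ : IsLagrangian d L₁) (hL₂ : IsLagrangian d L₂)
    (p₁ : ZMod d × ZMod d) (hp₁L : p₁ ∈ L₁) (hp₁0 : p₁ ≠ 0)
    (p₂ : ZMod d × ZMod d) (hp₂L : p₂ ∈ L₂) (hp₂0 : p₂ ≠ 0)
    (hdet : p₁.1 * p₂.2 - p₂.1 * p₁.2 = 0) : L₁ = L₂ := by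
  haveI := Fact.mk hd
  obtain ⟨t, rfl⟩ := exists_smul d hd p₁ p₂ hp₁0 (by linear_combination -hdet)
  have ht : t ≠ 0 := by rintro rfl; simp at hp₂0
  ext x
  rw [lagr_span d hd L₁ hL₁ p₁ hp₁L hp₁0 x, lagr_span d hd L₂ hL₂ (t • p₁) hp₂L hp₂0 x]
  constructor
  · rintro ⟨s, rfl⟩
    exact ⟨s * t⁻¹, by rw [smul_smul]; congr 1; field_simp⟩
  · rintro ⟨s, rfl⟩
    exact ⟨s * t, by rw [smul_smul]⟩

lemma flat_flat (d : ℕ) [NeZero d] (hd : Nat.Prime d) (u v : ZMod d → ℂ)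
    (m₁ m₂ : ZMod d) (hm : m₂ - m₁ ≠ 0) (c₁ c₂ : ℂ)
    (hrecu : ∀ j, ee d (m₁ * j) * u (j - 1) = c₁ * u j)
    (hrecv : ∀ j, ee d (m₂ * j) * v (j - 1) = c₂ * v j)
    (hu : ∑ j, ‖u j‖ ^ 2 = 1) (hv : ∑ j, ‖v j‖ ^ 2 = 1) :
    ‖∑ j, (starRingEnd ℂ) (u j) * v j‖ ^ 2 = 1 / d := by
  haveI := Fact.mk hd
  have hd0 : (d : ℝ) ≠ 0 := Nat.cast_ne_zero.mpr (NeZero.ne d)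
  have hd0' : (d : ℂ) ≠ 0 := Nat.cast_ne_zero.mpr (NeZero.ne d)
  obtain ⟨hc₁, hflatu⟩ := flat_of_rec d u m₁ c₁ hrecu hu
  obtain ⟨hc₂, hflatv⟩ := flat_of_rec d v m₂ c₂ hrecv hv
  have hc₁0 : c₁ ≠ 0 := by intro h; rw [h] at hc₁; simp at hc₁
  have hc₂0 : c₂ ≠ 0 := by intro h; rw [h] at hc₂; simp at hc₂
  have hc₁0' : (starRingEnd ℂ) c₁ ≠ 0 := by simpa using hc₁0
  set w : ZMod d → ℂ := fun j => (starRingEnd ℂ) (u j) * v j with hwdef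
  set δ : ZMod d := m₂ - m₁ with hδdef
  set K : ℂ := ((starRingEnd ℂ) c₁)⁻¹ * c₂⁻¹ with hK
  have hrecw : ∀ j, w j = K * ee d (δ * j) * w (j - 1) := by
    intro j
    have hcu := congrArg (starRingEnd ℂ) (hrecu j)
    rw [map_mul, map_mul, ee_conj] at hcu
    have hv' := hrecv j
    have h1 : (starRingEnd ℂ) (u j) = ((starRingEnd ℂ) c₁)⁻¹ * (ee d (-(m₁ * j)) * (starRingEnd ℂ) (u (j - 1))) := by
      field_simp
      linear_combination -hcu
    have h2 : v j = c₂⁻¹ * (ee d (m₂ * j) * v (j - 1)) := by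
      field_simp
      linear_combination -hv'
    have eemul : ee d (-(m₁ * j)) * ee d (m₂ * j) = ee d (δ * j) := by
      rw [← ee_add]; congr 1; rw [hδdef]; ring
    show (starRingEnd ℂ) (u j) * v j = K * ee d (δ * j) * ((starRingEnd ℂ) (u (j-1)) * v (j-1))
    rw [h1, h2, hK]
    linear_combination (((starRingEnd ℂ) c₁)⁻¹ * c₂⁻¹ * (starRingEnd ℂ) (u (j - 1)) * v (j - 1)) * eemul
  have hwn : ∀ k, w k * (starRingEnd ℂ) (w k) = ((((d:ℝ) ^ 2)⁻¹ : ℝ) : ℂ) := by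
    intro k
    have hnw : ‖w k‖ ^ 2 = ((d:ℝ) ^ 2)⁻¹ := by
      have h1 := hflatu k
      have h2 := hflatv k
      have h3 : ‖w k‖ ^ 2 = ‖u k‖ ^ 2 * ‖v k‖ ^ 2 := by
        show ‖(starRingEnd ℂ) (u k) * v k‖ ^ 2 = _
        rw [norm_mul, RCLike.norm_conj]
        ring
      rw [h3]
      field_simp
      linear_combination ((d:ℝ) * ‖v k‖ ^ 2) * h1 + h2
    rw [Complex.mul_conj, Complex.normSq_eq_norm_sq, hnw]
  set S : ℂ := ∑ j, w j with hS
  have hkey : S * (starRingEnd ℂ) S = (d : ℂ)⁻¹ := by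
    have step1 : S * (starRingEnd ℂ) S = ∑ k : ZMod d, ∑ t : ZMod d, w (k + t) * (starRingEnd ℂ) (w k) := by
      rw [map_sum, Finset.mul_sum]
      refine Finset.sum_congr rfl fun k _ => ?_
      rw [hS, Finset.sum_mul]
      apply Fintype.sum_equiv (Equiv.subRight k)
      intro j
      have h' : k + (j - k) = j := by ring
      simp only [Equiv.subRight_apply, h']
    rw [step1, Finset.sum_comm]
    rw [Finset.sum_eq_single (0 : ZMod d)]
    · have : ∀ k : ZMod d, w (k + 0) * (starRingEnd ℂ) (w k) = ((((d:ℝ) ^ 2)⁻¹ : ℝ) : ℂ) := by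
        intro k; rw [add_zero]; exact hwn k
      rw [Finset.sum_congr rfl fun k _ => this k, Finset.sum_const, Finset.card_univ, ZMod.card]
      rw [nsmul_eq_mul]
      push_cast
      field_simp
    · intro t _ ht
      obtain ⟨ph, hph⟩ := shift_of_rec d w δ K hrecw t
      have : ∀ k : ZMod d, w (k + t) * (starRingEnd ℂ) (w k) = ph * ((((d:ℝ) ^ 2)⁻¹ : ℝ) : ℂ) * ee d ((δ * t) * k) := by
        intro k
        rw [hph k]
        have := hwn k
        have harg : δ * t * k = (δ * t) * k := by ring
        linear_combination (ph * ee d ((δ * t) * k)) * this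
      rw [Finset.sum_congr rfl fun k _ => this k, ← Finset.mul_sum,
        sum_ee d (δ * t) (mul_ne_zero hm ht), mul_zero]
    · intro h; simp at h
  have hnormSq : ((‖S‖ ^ 2 : ℝ) : ℂ) = (d : ℂ)⁻¹ := by
    rw [← hkey, Complex.mul_conj, Complex.normSq_eq_norm_sq]
  have : ‖S‖ ^ 2 = (d : ℝ)⁻¹ := by
    have := hnormSq
    rw [show ((d:ℂ))⁻¹ = (((d:ℝ)⁻¹ : ℝ) : ℂ) by push_cast; ring] at this
    exact_mod_cast this
  rw [this, one_div]

lemma eig_flat (d : ℕ) [NeZero d] (hd : Nat.Prime d) (L : Submodule (ZMod d) (ZMod d × ZMod d))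
    (p : ZMod d × ZMod d) (hpL : p ∈ L) (hp1 : p.1 ≠ 0) (u : ZMod d → ℂ)
    (heig : ∀ q ∈ L, ∃ c : ℂ, weyl d q u = c • u) :
    ∃ c : ℂ, ∀ j, ee d ((p.1⁻¹ * p.2) * j) * u (j - 1) = c * u j := by
  haveI := Fact.mk hd
  have hq : ((1 : ZMod d), p.1⁻¹ * p.2) ∈ L := by
    have h := L.smul_mem p.1⁻¹ hpL
    have heq : p.1⁻¹ • p = ((1 : ZMod d), p.1⁻¹ * p.2) := by
      apply Prod.ext
      · show p.1⁻¹ * p.1 = 1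
        field_simp
      · rfl
    rwa [heq] at h
  obtain ⟨c, hc⟩ := heig _ hq
  exact ⟨c, fun j => by simpa [weyl, ee] using congrFun hc j⟩

lemma eig_delta (d : ℕ) [NeZero d] (hd : Nat.Prime d) (L : Submodule (ZMod d) (ZMod d × ZMod d))
    (p : ZMod d × ZMod d) (hpL : p ∈ L) (hp1 : p.1 = 0) (hp0 : p ≠ 0) (v : ZMod d → ℂ)
    (heig : ∀ q ∈ L, ∃ c : ℂ, weyl d q v = c • v) :
    ∃ c : ℂ, ∀ j, ee d j * v j = c * v j := by
  haveI := Fact.mk hd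
  have hp2 : p.2 ≠ 0 := fun h => hp0 (Prod.ext hp1 h)
  have hq : ((0 : ZMod d), (1 : ZMod d)) ∈ L := by
    have h := L.smul_mem p.2⁻¹ hpL
    have heq : p.2⁻¹ • p = ((0 : ZMod d), (1 : ZMod d)) := by
      apply Prod.ext
      · show p.2⁻¹ * p.1 = 0
        rw [hp1, mul_zero]
      · show p.2⁻¹ * p.2 = 1
        field_simp
    rwa [heq] at h
  obtain ⟨c, hc⟩ := heig _ hq
  exact ⟨c, fun j => by simpa [weyl, ee] using congrFun hc j⟩

/-- For `d` an odd prime, the `d+1` quadrature bases of `ℂ^d` — the common eigenbases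
of the maximal commuting sets of Weyl operators labeled by the Lagrangian lines of
`ℤ_d²` — are pairwise mutually unbiased: if `u` and `v` are unit common eigenvectors
of the Weyl operators along two distinct Lagrangian lines, then `|⟨u|v⟩|² = 1/d`. -/
theorem quadrature_bases_mutually_unbiased (d : ℕ) [NeZero d]
    (hd : Nat.Prime d) (hodd : Odd d)
    (L₁ L₂ : Submodule (ZMod d) (ZMod d × ZMod d))
    (hL₁ : IsLagrangian d L₁) (hL₂ : IsLagrangian d L₂) (hne : L₁ ≠ L₂)
    (u v : ZMod d → ℂ)
    (hu : ∑ j, ‖u j‖ ^ 2 = 1) (hv : ∑ j, ‖v j‖ ^ 2 = 1)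
    (heigu : ∀ p ∈ L₁, ∃ c : ℂ, weyl d p u = c • u)
    (heigv : ∀ p ∈ L₂, ∃ c : ℂ, weyl d p v = c • v) :
    ‖∑ j, (starRingEnd ℂ) (u j) * v j‖ ^ 2 = 1 / d := by
  haveI := Fact.mk hd
  have hd0 : (d : ℝ) ≠ 0 := Nat.cast_ne_zero.mpr (NeZero.ne d)
  obtain ⟨p₁, hp₁L, hp₁0⟩ := lagr_exists_nonzero d hd.one_lt L₁ hL₁
  obtain ⟨p₂, hp₂L, hp₂0⟩ := lagr_exists_nonzero d hd.one_lt L₂ hL₂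
  have hdet : p₁.1 * p₂.2 - p₂.1 * p₁.2 ≠ 0 := fun h =>
    hne (lagr_eq d hd L₁ L₂ hL₁ hL₂ p₁ hp₁L hp₁0 p₂ hp₂L hp₂0 h)
  by_cases h1 : p₁.1 = 0
  · -- u is a delta function, v is flat
    have h2 : p₂.1 ≠ 0 := by
      intro h
      apply hdet
      rw [h1, h]
      ring
    obtain ⟨c, hrecu⟩ := eig_delta d hd L₁ p₁ hp₁L h1 hp₁0 u heigu
    obtain ⟨j₀, h0, hn1⟩ := delta_of_rec d u c hrecu hu
    obtain ⟨c₂, hrecv⟩ := eig_flat d hd L₂ p₂ hp₂L h2 v heigv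
    obtain ⟨_, hflatv⟩ := flat_of_rec d v _ c₂ hrecv hv
    rw [Finset.sum_eq_single j₀ (fun b _ hb => by rw [h0 b hb]; simp) (by simp)]
    rw [norm_mul, RCLike.norm_conj, mul_pow, hn1, one_mul, eq_div_iff hd0]
    rw [mul_comm]
    exact hflatv j₀
  · by_cases h2 : p₂.1 = 0
    · -- v is a delta function, u is flat
      obtain ⟨c, hrecv⟩ := eig_delta d hd L₂ p₂ hp₂L h2 hp₂0 v heigv
      obtain ⟨j₀, h0, hn1⟩ := delta_of_rec d v c hrecv hv
      obtain ⟨c₁, hrecu⟩ := eig_flat d hd L₁ p₁ hp₁L h1 u heigu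
      obtain ⟨_, hflatu⟩ := flat_of_rec d u _ c₁ hrecu hu
      rw [Finset.sum_eq_single j₀ (fun b _ hb => by rw [h0 b hb, mul_zero]) (by simp)]
      rw [norm_mul, RCLike.norm_conj, mul_pow, hn1, mul_one, eq_div_iff hd0]
      rw [mul_comm]
      exact hflatu j₀
    · -- both flat
      obtain ⟨c₁, hrecu⟩ := eig_flat d hd L₁ p₁ hp₁L h1 u heigu
      obtain ⟨c₂, hrecv⟩ := eig_flat d hd L₂ p₂ hp₂L h2 v heigv
      have hm : p₂.1⁻¹ * p₂.2 - p₁.1⁻¹ * p₁.2 ≠ 0 := by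
        intro h
        apply hdet
        have h' : p₂.1⁻¹ * p₂.2 = p₁.1⁻¹ * p₁.2 := by linear_combination h
        field_simp at h'
        linear_combination h'
      exact flat_flat d hd u v _ _ hm c₁ c₂ hrecu hrecv hu hv
end
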